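/- Let (X, F, μ) be a σ-finite measure space, A ∈ F, p_0 a probability density with P_0(A^c) := 1 − ∫_A p_0 dμ > 0, and α ∈ (0,1). Let φ : X → [0,1] be a measurable test of level α for the composite null hypothesis, i.e. ∫_A φ·p_0 dμ + ∫_{A^c} φ·p dμ ≤ α for every probability density p with p·1_A = p_0·1_A μ-a.e. Define β = min((α − ∫_A φ·p_0 dμ)/P_0(A^c), 1) and φ̃ = φ·1_A + β·1_{A^c}. Then: (i) φ̃ also has level α, i.e. ∫_X φ̃·p dμ ≤ α for every density p with p·1_A = p_0·1_A μ-a.e.; and (ii) φ ≤ φ̃ μ-a.e., so that ∫_X φ̃·q dμ ≥ ∫_X φ·q dμ for every probability density q, i.e. φ̃ is uniformly more powerful than φ. -/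

import Mathlib

/-!
Applying the level condition to the null density obtained from `p₀` by spreading the missing mass
`P₀(Aᶜ)` uniformly over a set `B ⊆ Aᶜ` of finite positive measure shows that the average of
`φ` over `B` is at most `c = (α - ∫_A φ p₀) / P₀(Aᶜ)`. As `B` is arbitrary and `μ` is σ-finite,
`φ ≤ c` a.e. on `Aᶜ`, and also `φ ≤ 1`, so `φ ≤ φ̃` a.e. Every null density `p` has mass
`P₀(Aᶜ)` on `Aᶜ`, so the size of `φ̃` under `p` is `∫_A φ p₀ + β P₀(Aᶜ) ≤ α`.
-/

open MeasureTheory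
open scoped Classical ENNReal

noncomputable section

/-- A probability density with respect to `μ`. -/
def IsDensity {X : Type*} [MeasurableSpace X] (μ : Measure X) (p : X → ℝ) : Prop :=
  Measurable p ∧ (∀ x, 0 ≤ p x) ∧ ∫ x, p x ∂μ = 1

open Set

section

variable {X : Type*} [MeasurableSpace X] {μ : Measure X}

theorem IsDensity.integrable {p : X → ℝ} (hp : IsDensity μ p) : Integrable p μ :=
  .of_integral_ne_zero (hp.2.2 ▸ one_ne_zero)

theorem ae_le_of_forall_setIntegral_le_mul_measureReal [SigmaFinite μ] {f : X → ℝ} {S : Set X}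
    {c : ℝ} (hS : MeasurableSet S)
    (hf : ∀ B, MeasurableSet B → μ B < ∞ → IntegrableOn f B μ)
    (hle : ∀ B ⊆ S, MeasurableSet B → 0 < μ B → μ B < ∞ → ∫ x in B, f x ∂μ ≤ c * μ.real B) :
    ∀ᵐ x ∂μ, x ∈ S → f x ≤ c := by
  rw [← ae_restrict_iff' hS]
  have hnonneg : 0 ≤ᵐ[μ.restrict S] fun x => c - f x := by
    refine ae_nonneg_of_forall_setIntegral_nonneg_of_sigmaFinite (fun B hB hμB => ?_)
      (fun B hB hμB => ?_) <;>
      rw [Measure.restrict_apply hB] at hμB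
    · rw [IntegrableOn, Measure.restrict_restrict hB]
      exact (integrableOn_const (C := c) hμB.ne).sub (hf _ (hB.inter hS) hμB)
    · rw [Measure.restrict_restrict hB]
      rcases eq_zero_or_pos (μ (B ∩ S)) with h0 | hpos
      · rw [Measure.restrict_eq_zero.mpr h0, integral_zero_measure]
      · rw [integral_sub (integrableOn_const (C := c) hμB.ne) (hf _ (hB.inter hS) hμB),
          setIntegral_const, smul_eq_mul, sub_nonneg, mul_comm]
        exact hle _ inter_subset_right (hB.inter hS) hpos hμB
  filter_upwards [hnonneg] with x hx
  exact sub_nonneg.mp hx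

theorem IsDensity.integrable_mul_of_abs_le {p ψ : X → ℝ} (hp : IsDensity μ p)
    (hψ : Measurable ψ) {C : ℝ} (hψC : ∀ x, |ψ x| ≤ C) : Integrable (fun x => ψ x * p x) μ :=
  hp.integrable.bdd_mul hψ.aestronglyMeasurable (ae_of_all _ hψC)

def uniformExtension (μ : Measure X) (A : Set X) (p₀ : X → ℝ) (B : Set X) : X → ℝ :=
  A.indicator p₀ + B.indicator fun _ => (1 - ∫ x in A, p₀ x ∂μ) / μ.real B

section uniformExtension

variable {A B : Set X} {p₀ : X → ℝ}

theorem isDensity_uniformExtension (hp₀ : IsDensity μ p₀) (hA : MeasurableSet A)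
    (hP₀ : ∫ x in A, p₀ x ∂μ ≤ 1) (hB : MeasurableSet B) (hB0 : 0 < μ B) (hBtop : μ B < ∞) :
    IsDensity μ (uniformExtension μ A p₀ B) := by
  have hμB : μ.real B ≠ 0 := (ENNReal.toReal_pos hB0.ne' hBtop.ne).ne'
  refine ⟨(hp₀.1.indicator hA).add (measurable_const.indicator hB), fun x => ?_, ?_⟩
  · exact add_nonneg (indicator_nonneg (fun y _ => hp₀.2.1 y) x)
      (indicator_nonneg (fun _ _ => div_nonneg (sub_nonneg.mpr hP₀) measureReal_nonneg) x)
  · simp only [uniformExtension, Pi.add_apply]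
    rw [integral_add (hp₀.integrable.indicator hA)
      ((integrable_indicator_iff hB).mpr
        (integrableOn_const (C := (1 - ∫ x in A, p₀ x ∂μ) / μ.real B) hBtop.ne)),
      integral_indicator hA, integral_indicator hB, setIntegral_const, smul_eq_mul,
      mul_div_cancel₀ _ hμB, add_sub_cancel]

theorem uniformExtension_eq_of_mem (hBA : B ⊆ Aᶜ) {x : X} (hx : x ∈ A) :
    uniformExtension μ A p₀ B x = p₀ x := by
  have hxB : x ∉ B := fun hxB => hBA hxB hx
  simp [uniformExtension, indicator_of_mem hx, indicator_of_notMem hxB]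

theorem setIntegral_compl_mul_uniformExtension (hA : MeasurableSet A) (hB : MeasurableSet B)
    (hBA : B ⊆ Aᶜ) (φ : X → ℝ) :
    ∫ x in Aᶜ, φ x * uniformExtension μ A p₀ B x ∂μ =
      (1 - ∫ x in A, p₀ x ∂μ) / μ.real B * ∫ x in B, φ x ∂μ := by
  have hcongr : EqOn (fun x => φ x * uniformExtension μ A p₀ B x)
      (B.indicator fun x => φ x * ((1 - ∫ x in A, p₀ x ∂μ) / μ.real B)) Aᶜ := by
    intro x hx
    by_cases hxB : x ∈ B <;>
      simp [uniformExtension, hxB, indicator_of_notMem (show x ∉ A from hx)]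
  rw [setIntegral_congr_fun hA.compl hcongr, setIntegral_indicator hB, inter_eq_right.mpr hBA,
    integral_mul_const, mul_comm]

end uniformExtension

section level

variable {A : Set X} {p₀ φ : X → ℝ} {α : ℝ}

theorem setIntegral_le_of_level (hA : MeasurableSet A) (hp₀ : IsDensity μ p₀)
    (hP₀ : ∫ x in A, p₀ x ∂μ < 1)
    (hlevel : ∀ p : X → ℝ, IsDensity μ p → (∀ᵐ x ∂μ, x ∈ A → p x = p₀ x) →
      (∫ x in A, φ x * p₀ x ∂μ) + ∫ x in Aᶜ, φ x * p x ∂μ ≤ α)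
    {B : Set X} (hBA : B ⊆ Aᶜ) (hB : MeasurableSet B) (hB0 : 0 < μ B) (hBtop : μ B < ∞) :
    ∫ x in B, φ x ∂μ ≤
      (α - ∫ x in A, φ x * p₀ x ∂μ) / (1 - ∫ x in A, p₀ x ∂μ) * μ.real B := by
  have hP : 0 < 1 - ∫ x in A, p₀ x ∂μ := sub_pos.mpr hP₀
  have hμB : 0 < μ.real B := ENNReal.toReal_pos hB0.ne' hBtop.ne
  have h := hlevel _ (isDensity_uniformExtension hp₀ hA hP₀.le hB hB0 hBtop)
    (ae_of_all _ fun x => uniformExtension_eq_of_mem hBA)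
  rw [setIntegral_compl_mul_uniformExtension hA hB hBA, ← le_sub_iff_add_le'] at h
  rw [div_mul_eq_mul_div, le_div_iff₀ hP]
  rwa [div_mul_eq_mul_div, div_le_iff₀ hμB, mul_comm] at h

theorem ae_le_of_level [SigmaFinite μ] (hA : MeasurableSet A) (hp₀ : IsDensity μ p₀)
    (hP₀ : ∫ x in A, p₀ x ∂μ < 1) (hφm : Measurable φ) {C : ℝ} (hφC : ∀ x, |φ x| ≤ C)
    (hlevel : ∀ p : X → ℝ, IsDensity μ p → (∀ᵐ x ∂μ, x ∈ A → p x = p₀ x) →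
      (∫ x in A, φ x * p₀ x ∂μ) + ∫ x in Aᶜ, φ x * p x ∂μ ≤ α) :
    ∀ᵐ x ∂μ, x ∈ Aᶜ →
      φ x ≤ (α - ∫ x in A, φ x * p₀ x ∂μ) / (1 - ∫ x in A, p₀ x ∂μ) := by
  refine ae_le_of_forall_setIntegral_le_mul_measureReal hA.compl (fun B _ hBtop => ?_)
    (fun B hBA hB hB0 hBtop => setIntegral_le_of_level hA hp₀ hP₀ hlevel hBA hB hB0 hBtop)
  exact Measure.integrableOn_of_bounded (M := C) hBtop.ne hφm.aestronglyMeasurable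
    (ae_of_all _ hφC)

end level

theorem integral_ite_mul_of_ae_eq_on {A : Set X} {p₀ p φ : X → ℝ} (b : ℝ) (hA : MeasurableSet A)
    (hp : IsDensity μ p) (hpA : ∀ᵐ x ∂μ, x ∈ A → p x = p₀ x)
    (hint : Integrable (fun x => (if x ∈ A then φ x else b) * p x) μ) :
    ∫ x, (if x ∈ A then φ x else b) * p x ∂μ =
      (∫ x in A, φ x * p₀ x ∂μ) + b * (1 - ∫ x in A, p₀ x ∂μ) := by
  have hpA' : ∀ᵐ x ∂μ.restrict A, p x = p₀ x := (ae_restrict_iff' hA).mpr hpA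
  have hmassA : ∫ x in A, p x ∂μ = ∫ x in A, p₀ x ∂μ := integral_congr_ae hpA'
  have hmassAc : ∫ x in Aᶜ, p x ∂μ = 1 - ∫ x in A, p₀ x ∂μ := by
    rw [← hmassA, ← hp.2.2, ← integral_add_compl hA hp.integrable, add_sub_cancel_left]
  have honA : ∫ x in A, (if x ∈ A then φ x else b) * p x ∂μ = ∫ x in A, φ x * p₀ x ∂μ := by
    refine integral_congr_ae ?_
    filter_upwards [hpA', ae_restrict_mem hA] with x hx hxA
    simp [hxA, hx]
  have honAc : ∫ x in Aᶜ, (if x ∈ A then φ x else b) * p x ∂μ = b * ∫ x in Aᶜ, p x ∂μ := by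
    rw [← integral_const_mul]
    exact setIntegral_congr_fun hA.compl fun x hx => by simp [show x ∉ A from hx]
  rw [← integral_add_compl hA hint, honA, honAc, hmassAc]

end

theorem censored_test_improvement_general
    {X : Type*} [MeasurableSpace X] (μ : Measure X) [SigmaFinite μ]
    (A : Set X) (hA : MeasurableSet A)
    (p₀ : X → ℝ) (hp₀ : IsDensity μ p₀)
    (hP₀ : ∫ x in A, p₀ x ∂μ < 1)
    (α : ℝ)
    (φ : X → ℝ) (hφm : Measurable φ) (hφ01 : ∀ x, φ x ∈ Set.Icc (0 : ℝ) 1)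
    -- `φ` has level `α` for the composite null hypothesis:
    (hlevel : ∀ p : X → ℝ, IsDensity μ p → (∀ᵐ x ∂μ, x ∈ A → p x = p₀ x) →
      (∫ x in A, φ x * p₀ x ∂μ) + ∫ x in Aᶜ, φ x * p x ∂μ ≤ α) :
    -- (i) `φ̃` also has level `α`:
    (∀ p : X → ℝ, IsDensity μ p → (∀ᵐ x ∂μ, x ∈ A → p x = p₀ x) →
      ∫ x, (if x ∈ A then φ x
            else min ((α - ∫ y in A, φ y * p₀ y ∂μ) / (1 - ∫ y in A, p₀ y ∂μ)) 1)
          * p x ∂μ ≤ α) ∧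
    -- (ii) `φ ≤ φ̃` μ-a.e., and `φ̃` is uniformly more powerful than `φ`:
    (∀ᵐ x ∂μ, φ x ≤
      (if x ∈ A then φ x
       else min ((α - ∫ y in A, φ y * p₀ y ∂μ) / (1 - ∫ y in A, p₀ y ∂μ)) 1)) ∧
    (∀ q : X → ℝ, IsDensity μ q →
      ∫ x, φ x * q x ∂μ ≤
        ∫ x, (if x ∈ A then φ x
              else min ((α - ∫ y in A, φ y * p₀ y ∂μ) / (1 - ∫ y in A, p₀ y ∂μ)) 1)
            * q x ∂μ) := by
  set c := (α - ∫ y in A, φ y * p₀ y ∂μ) / (1 - ∫ y in A, p₀ y ∂μ)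
  have hP : 0 < 1 - ∫ y in A, p₀ y ∂μ := sub_pos.mpr hP₀
  have hφ1 : ∀ x, |φ x| ≤ 1 := fun x => abs_le.mpr ⟨by linarith [(hφ01 x).1], (hφ01 x).2⟩
  have hdom : ∀ᵐ x ∂μ, φ x ≤ if x ∈ A then φ x else min c 1 := by
    filter_upwards [ae_le_of_level hA hp₀ hP₀ hφm hφ1 hlevel] with x hx
    split_ifs with hxA
    · exact le_rfl
    · exact le_min (hx hxA) (hφ01 x).2
  have hψ1 : ∀ x, |if x ∈ A then φ x else min c 1| ≤ max 1 |min c 1| := fun x => by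
    split_ifs
    · exact le_max_of_le_left (hφ1 x)
    · exact le_max_right _ _
  have hψm : Measurable fun x => if x ∈ A then φ x else min c 1 := hφm.ite hA measurable_const
  refine ⟨fun p hp hpA => ?_, hdom, fun q hq => ?_⟩
  · rw [integral_ite_mul_of_ae_eq_on _ hA hp hpA (hp.integrable_mul_of_abs_le hψm hψ1)]
    have hmass : min c 1 * (1 - ∫ y in A, p₀ y ∂μ) ≤ α - ∫ y in A, φ y * p₀ y ∂μ :=
      (mul_le_mul_of_nonneg_right (min_le_left _ _) hP.le).trans_eq (div_mul_cancel₀ _ hP.ne')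
    linarith
  · exact integral_mono_ae (hq.integrable_mul_of_abs_le hφm hφ1)
      (hq.integrable_mul_of_abs_le hψm hψ1)
      (hdom.mono fun x hx => mul_le_mul_of_nonneg_right hx (hq.2.1 x))

/-- Let `φ` be a level-`α` test for the composite null hypothesis
`{p : p·1_A = p₀·1_A μ-a.e.}`. With `β = min((α − ∫_A φ·p₀ dμ)/P₀(Aᶜ), 1)` the modified
test `φ̃ = φ·1_A + β·1_{Aᶜ}` (i) also has level `α`, and (ii) dominates `φ` μ-a.e., hence
is uniformly more powerful than `φ`. -/
theorem censored_test_improvement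
    {X : Type*} [MeasurableSpace X] (μ : Measure X) [SigmaFinite μ]
    (A : Set X) (hA : MeasurableSet A)
    (p₀ : X → ℝ) (hp₀ : IsDensity μ p₀)
    (hP₀ : ∫ x in A, p₀ x ∂μ < 1)
    (α : ℝ) (hα : α ∈ Set.Ioo (0 : ℝ) 1)
    (φ : X → ℝ) (hφm : Measurable φ) (hφ01 : ∀ x, φ x ∈ Set.Icc (0 : ℝ) 1)
    -- `φ` has level `α` for the composite null hypothesis:
    (hlevel : ∀ p : X → ℝ, IsDensity μ p → (∀ᵐ x ∂μ, x ∈ A → p x = p₀ x) →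
      (∫ x in A, φ x * p₀ x ∂μ) + ∫ x in Aᶜ, φ x * p x ∂μ ≤ α) :
    -- (i) `φ̃` also has level `α`:
    (∀ p : X → ℝ, IsDensity μ p → (∀ᵐ x ∂μ, x ∈ A → p x = p₀ x) →
      ∫ x, (if x ∈ A then φ x
            else min ((α - ∫ y in A, φ y * p₀ y ∂μ) / (1 - ∫ y in A, p₀ y ∂μ)) 1)
          * p x ∂μ ≤ α) ∧
    -- (ii) `φ ≤ φ̃` μ-a.e., and `φ̃` is uniformly more powerful than `φ`:
    (∀ᵐ x ∂μ, φ x ≤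
      (if x ∈ A then φ x
       else min ((α - ∫ y in A, φ y * p₀ y ∂μ) / (1 - ∫ y in A, p₀ y ∂μ)) 1)) ∧
    (∀ q : X → ℝ, IsDensity μ q →
      ∫ x, φ x * q x ∂μ ≤
        ∫ x, (if x ∈ A then φ x
              else min ((α - ∫ y in A, φ y * p₀ y ∂μ) / (1 - ∫ y in A, p₀ y ∂μ)) 1)
            * q x ∂μ) :=
  censored_test_improvement_general μ A hA p₀ hp₀ hP₀ α φ hφm hφ01 hlevel
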